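/- arXiv:1810.03573 — 4 statements merged into one kernel-verified Lean document; each statement's English description precedes it below -/
import Mathlib

section
/- Let u and v be nonempty palindromes such that u is a proper prefix of v and |u| ≥ |v|/2. Define n = ⌈|v|/2⌉ and k = ⌈|u|/2⌉ if |u| is odd, k = |u|/2 + 1 if |u| is even; and define ρ(u,v) = v[n]v[n−1]⋯v[k+1]v[k]v[k]v[k+1]⋯v[n−1]v[n] if |u| is even, and ρ(u,v) = v[n]v[n−1]⋯v[k+1]v[k]v[k+1]⋯v[n−1]v[n] if |u| is odd. Then if u₁, u₂, v₁, v₂ are nonempty palindromes with |v₁| = |v₂|, u₁ a proper prefix of v₁ with |u₁| ≥ |v₁|/2, u₂ a proper prefix of v₂ with |u₂| ≥ |v₂|/2, and ρ(u₁,v₁) = ρ(u₂,v₂), it follows that v₁ = v₂. In other words, the palindrome ρ(u,v) together with the length |v| uniquely determines the palindrome v. -/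
/-!
A palindromic prefix `u` of a palindrome `v` is also a suffix of `v`, so `v` has period
`|v| - |u|`. Since `|rho u v| = 2⌈|v|/2⌉ - |u|`, the word `rho u v` and `|v|` determine `|u|`,
hence this period. The first half of `rho u v` spells `v` backwards from its centre down to
position `⌊|u|/2⌋ + 1`; reflecting in the palindrome `v`, one recovers the letters of `v` at
positions `⌊|u|/2⌋ + 1, …, |v| - ⌊|u|/2⌋`, at least `|v| - |u|` consecutive ones, i.e. a full
period, and a periodic word is determined by its length and a full period.
-/

namespace RichWords

/-- A word over the alphabet `A`: either finite or infinite. -/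
inductive Word (A : Type*) where
  | fin : List A → Word A
  | inf : (ℕ → A) → Word A

/-- `w.Factor u` : the finite word `u` is a factor of the word `w`. -/
def Word.Factor {A : Type*} : Word A → List A → Prop
  | .fin v, u => u <:+: v
  | .inf f, u => ∃ i : ℕ, u = List.ofFn (fun j : Fin u.length => f (i + (j : ℕ)))

/-- `F w n` : the set of factors of length `n` of the word `w`. -/
def F {A : Type*} (w : Word A) (n : ℕ) : Set (List A) :=
  {u | w.Factor u ∧ u.length = n}

/-- `Fp w n` : the set of palindromic factors of length `n` of the word `w`. -/
def Fp {A : Type*} (w : Word A) (n : ℕ) : Set (List A) :=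
  {u | u ∈ F w n ∧ u.reverse = u}

/-- A finite word of length `m` is rich if it contains `m + 1` distinct palindromic
factors (the empty word included). -/
def RichList {A : Type*} (v : List A) : Prop :=
  {u | u <:+: v ∧ u.reverse = u}.ncard = v.length + 1

/-- A word (finite or infinite) is rich: a finite word is rich as above, and an
infinite word is rich if every finite factor of it is rich. -/
def Word.Rich {A : Type*} : Word A → Prop
  | .fin v => RichList v
  | .inf f => ∀ u : List A, (Word.inf f).Factor u → RichList u

/-- `gamma w n` : the set of `u`-switches of length `n` of `w`, i.e. factors of the
form `a u b` with `a ≠ b` letters and `u` a palindrome; empty for `n ≤ 2`. -/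
def gamma {A : Type*} (w : Word A) (n : ℕ) : Set (List A) :=
  {v | 2 < n ∧ v ∈ F w n ∧
    ∃ (a b : A) (u : List A), a ≠ b ∧ v = a :: (u ++ [b]) ∧ u.reverse = u}

/-- `gammaBar w n` : the set of pairs `(u, c)` such that `a u b ∈ gamma w n`
for some letters `a ≠ b` with `c ∈ {a, b}`. -/
def gammaBar {A : Type*} (w : Word A) (n : ℕ) : Set (List A × A) :=
  {p | ∃ a b : A, a ≠ b ∧ (a :: (p.1 ++ [b])) ∈ gamma w n ∧ (p.2 = a ∨ p.2 = b)}

/-- `Gam w n = max {1, max {|gamma w i| : 0 ≤ i ≤ n}}`. -/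
noncomputable def Gam {A : Type*} (w : Word A) (n : ℕ) : ℕ :=
  max 1 ((Finset.range (n + 1)).sup fun i => (gamma w i).ncard)

/-- `trim v` removes the first and the last letter of `v`. -/
def trim {A : Type*} (v : List A) : List A := (v.drop 1).dropLast

/-- `IsLpps u r` : `r` is the longest proper palindromic suffix of `u`
(for `|u| ≤ 1` it is the empty word). -/
def IsLpps {A : Type*} (u r : List A) : Prop :=
  if u.length ≤ 1 then r = []
  else r <:+ u ∧ r.reverse = r ∧ r ≠ u ∧
    ∀ s : List A, s <:+ u → s.reverse = s → s ≠ u → s.length ≤ r.length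

/-- `seg v k n = v[k] v[k+1] ⋯ v[n]` (1-based indexing). -/
def seg {A : Type*} (v : List A) (k n : ℕ) : List A := (v.drop (k - 1)).take (n + 1 - k)

/-- `rho u v` for a palindromic proper prefix `u` of `v` with `|u| ≥ |v| / 2`:
with `n = ⌈|v|/2⌉` and `k = ⌈|u|/2⌉` if `|u|` is odd, `k = |u|/2 + 1` if `|u|` is even,
`rho u v = v[n]⋯v[k]v[k]⋯v[n]` if `|u|` is even and `v[n]⋯v[k]⋯v[n]` if `|u|` is odd. -/
def rho {A : Type*} (u v : List A) : List A :=
  let n := (v.length + 1) / 2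
  let k := if u.length % 2 = 1 then (u.length + 1) / 2 else u.length / 2 + 1
  let s := seg v k n
  if u.length % 2 = 1 then s.reverse ++ s.tail else s.reverse ++ s

end RichWords

namespace List

variable {α : Type*} {u v w : List α} {p : ℕ}

theorem HasPeriod.eq_of_getElem?_eq_of_lt (hv : v.HasPeriod p) (hw : w.HasPeriod p) (hp : 0 < p)
    (hlen : v.length = w.length) (h : ∀ i < p, v[i]? = w[i]?) : v = w := by
  refine ext_getElem? fun i => ?_
  by_cases hi : i < v.length
  · rw [hasPeriod_iff_forall_getElem?_mod.1 hv i hi,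
      hasPeriod_iff_forall_getElem?_mod.1 hw i (hlen ▸ hi)]
    exact h _ (Nat.mod_lt i hp)
  · rw [getElem?_eq_none (by omega), getElem?_eq_none (by omega)]

theorem HasPeriod.eq_of_getElem?_eq_of_window (hv : v.HasPeriod p) (hw : w.HasPeriod p)
    (hp : 0 < p) (hlen : v.length = w.length) (a : ℕ) (ha : a + p ≤ v.length)
    (h : ∀ i, a ≤ i → i < a + p → v[i]? = w[i]?) : v = w := by
  induction a with
  | zero => exact hv.eq_of_getElem?_eq_of_lt hw hp hlen fun i hi => h i i.zero_le (by omega)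
  | succ a ih =>
    refine ih (by omega) fun i hai hip => ?_
    rcases hai.eq_or_lt with rfl | hai
    · rw [hasPeriod_iff_getElem?.1 hv a (by omega), hasPeriod_iff_getElem?.1 hw a (by omega)]
      exact h _ (by omega) (by omega)
    · exact h i hai (by omega)

theorem hasPeriod_length_sub_length_of_isPrefix (hpre : u <+: v) (hu : u.reverse = u)
    (hv : v.reverse = v) : v.HasPeriod (v.length - u.length) := by
  obtain ⟨t, rfl⟩ := hpre
  have hflip : t.reverse ++ u = u ++ t := by simpa [hu] using hv
  have hp : (u ++ t).length - u.length = t.reverse.length := by simp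
  rw [HasPeriod, hp]
  nth_rw 1 2 [← hflip]
  rw [take_left]
  exact prefix_append_right_inj _ |>.2 (prefix_append _ _)

end List

namespace RichWords

section

variable {α : Type*} {u v : List α} {u₁ u₂ v₁ v₂ : List α}

theorem length_seg (v : List α) {k n : ℕ} (hk : 1 ≤ k) (hn : n ≤ v.length) :
    (seg v k n).length = n + 1 - k := by
  simp only [seg, List.length_take, List.length_drop]
  omega

theorem getElem?_reverse_seg (v : List α) {k n t : ℕ} (hk : 1 ≤ k) (hn : n ≤ v.length)
    (ht : t + k ≤ n) : (seg v k n).reverse[t]? = v[n - 1 - t]? := by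
  rw [List.getElem?_reverse (by rw [length_seg v hk hn]; omega), length_seg v hk hn, seg,
    List.getElem?_take_of_lt (by omega), List.getElem?_drop]
  congr 1
  omega

/-- For odd `|u|`, `⌈|u|/2⌉ = ⌊|u|/2⌋ + 1`, so both parities start the segment at the same
index. -/
theorem rho_eq (u v : List α) :
    rho u v = (seg v (u.length / 2 + 1) ((v.length + 1) / 2)).reverse ++
      (seg v (u.length / 2 + 1) ((v.length + 1) / 2)).drop (u.length % 2) := by
  rcases Nat.mod_two_eq_zero_or_one u.length with h | h
  · simp [rho, h]
  · have hk : (u.length + 1) / 2 = u.length / 2 + 1 := by omega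
    simp [rho, h, hk]

theorem length_rho (h : u.length ≤ v.length) :
    (rho u v).length + u.length = 2 * ((v.length + 1) / 2) := by
  rw [rho_eq, List.length_append, List.length_reverse, List.length_drop,
    length_seg v (by omega) (by omega)]
  omega

theorem getElem?_rho {t : ℕ} (ht : t + u.length / 2 < (v.length + 1) / 2) :
    (rho u v)[t]? = v[(v.length + 1) / 2 - 1 - t]? := by
  rw [rho_eq, List.getElem?_append_left
    (by rw [List.length_reverse, length_seg v (by omega) (by omega)]; omega)]
  exact getElem?_reverse_seg v (by omega) (by omega) (by omega)

theorem getElem?_eq_of_rho_eq_of_lt (hlen : v₁.length = v₂.length)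
    (hq : u₁.length = u₂.length) (hrho : rho u₁ v₁ = rho u₂ v₂) {i : ℕ}
    (hi₁ : u₁.length / 2 ≤ i) (hi₂ : i < (v₁.length + 1) / 2) : v₁[i]? = v₂[i]? := by
  have hidx : (v₁.length + 1) / 2 - 1 - ((v₁.length + 1) / 2 - 1 - i) = i := by omega
  calc v₁[i]? = (rho u₁ v₁)[(v₁.length + 1) / 2 - 1 - i]? := by
        rw [getElem?_rho (by omega), hidx]
    _ = (rho u₂ v₂)[(v₁.length + 1) / 2 - 1 - i]? := by rw [hrho]
    _ = v₂[i]? := by rw [getElem?_rho (by omega), ← hlen, hidx]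

theorem getElem?_eq_of_rho_eq (hlen : v₁.length = v₂.length)
    (hq : u₁.length = u₂.length) (hrho : rho u₁ v₁ = rho u₂ v₂) (hpv₁ : v₁.reverse = v₁)
    (hpv₂ : v₂.reverse = v₂) {i : ℕ} (hi₁ : u₁.length / 2 ≤ i)
    (hi₂ : i + u₁.length / 2 < v₁.length) : v₁[i]? = v₂[i]? := by
  by_cases hi : i < (v₁.length + 1) / 2
  · exact getElem?_eq_of_rho_eq_of_lt hlen hq hrho hi₁ hi
  · rw [← hpv₁, ← hpv₂, List.getElem?_reverse (by omega), List.getElem?_reverse (by omega),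
      ← hlen]
    exact getElem?_eq_of_rho_eq_of_lt hlen hq hrho (by omega) (by omega)

end

theorem rho_determines_palindrome_general {A : Type*} (u₁ u₂ v₁ v₂ : List A)
    (hpu₁ : u₁.reverse = u₁) (hpu₂ : u₂.reverse = u₂)
    (hpv₁ : v₁.reverse = v₁) (hpv₂ : v₂.reverse = v₂)
    (hlen : v₁.length = v₂.length)
    (hpre₁ : u₁ <+: v₁) (hne₁ : u₁ ≠ v₁)
    (hpre₂ : u₂ <+: v₂)
    (hrho : rho u₁ v₁ = rho u₂ v₂) :
    v₁ = v₂ := by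
  have hq : u₁.length = u₂.length := by
    have h₁ := length_rho hpre₁.length_le
    have h₂ := length_rho hpre₂.length_le
    rw [hrho, hlen] at h₁
    omega
  have hlt : u₁.length < v₁.length :=
    hpre₁.length_le.lt_of_ne fun h => hne₁ (hpre₁.eq_of_length h)
  have hper₁ := List.hasPeriod_length_sub_length_of_isPrefix hpre₁ hpu₁ hpv₁
  have hper₂ := List.hasPeriod_length_sub_length_of_isPrefix hpre₂ hpu₂ hpv₂
  rw [← hlen, ← hq] at hper₂
  exact hper₁.eq_of_getElem?_eq_of_window hper₂ (by omega) hlen (u₁.length / 2) (by omega)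
    fun i hi₁ hi₂ => getElem?_eq_of_rho_eq hlen hq hrho hpv₁ hpv₂ hi₁ (by omega)

/-- the palindrome `rho u v` together with the length `|v|` uniquely
determines the palindrome `v`. -/
theorem rho_determines_palindrome {A : Type*} (u₁ u₂ v₁ v₂ : List A)
    (hu₁ : u₁ ≠ []) (hu₂ : u₂ ≠ []) (hv₁ : v₁ ≠ []) (hv₂ : v₂ ≠ [])
    (hpu₁ : u₁.reverse = u₁) (hpu₂ : u₂.reverse = u₂)
    (hpv₁ : v₁.reverse = v₁) (hpv₂ : v₂.reverse = v₂)
    (hlen : v₁.length = v₂.length)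
    (hpre₁ : u₁ <+: v₁) (hne₁ : u₁ ≠ v₁) (hhalf₁ : v₁.length ≤ 2 * u₁.length)
    (hpre₂ : u₂ <+: v₂) (hne₂ : u₂ ≠ v₂) (hhalf₂ : v₂.length ≤ 2 * u₂.length)
    (hrho : rho u₁ v₁ = rho u₂ v₂) :
    v₁ = v₂ :=
  rho_determines_palindrome_general u₁ u₂ v₁ v₂ hpu₁ hpu₂ hpv₁ hpv₂ hlen hpre₁ hne₁ hpre₂ hrho

end RichWords
end

section
/- For every integer n ≥ 1, with k = ⌊log₂ n⌋, one has ∏_{j=1}^{k} ⌈n/2ʲ⌉ ≤ (2√n)^{log₂ n}. -/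
/-!
Write `L = log₂ n` and `k = ⌊L⌋`. For `j ≤ k` we have `n / 2ʲ ≥ 1`, so
`⌈n / 2ʲ⌉ ≤ 2n / 2ʲ = 2^(1 + L - j)` and the product is at most `2^(k(1 + L) - k(k + 1)/2)`.
The right-hand side is `2^(L + L²/2)`, and the exponents differ by `(L - k)²/2 + (L - k/2) ≥ 0`.
-/

open Real Finset

lemma Finset.sum_Icc_one_natCast {K : Type*} [Field K] [CharZero K] (k : ℕ) :
    ∑ j ∈ Icc 1 k, (j : K) = k * (k + 1) / 2 := by
  induction k with
  | zero => simp
  | succ k ih => rw [sum_Icc_succ_top (by omega), ih]; push_cast; ring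

lemma natCeil_div_two_pow_le_rpow {x : ℝ} {j : ℕ} (hj : 2 ^ j ≤ x) :
    (⌈x / 2 ^ j⌉₊ : ℝ) ≤ 2 ^ (1 + logb 2 x - j) := by
  have hx : 0 < x := lt_of_lt_of_le (by positivity) hj
  have hquot : 1 ≤ x / 2 ^ j := (one_le_div (by positivity)).2 hj
  calc (⌈x / 2 ^ j⌉₊ : ℝ) ≤ 2 * (x / 2 ^ j) := Nat.ceil_le_two_mul (by linarith)
    _ = 2 ^ (1 + logb 2 x - j) := by
      rw [rpow_sub two_pos, rpow_add two_pos, rpow_one, rpow_logb two_pos (by norm_num) hx,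
        rpow_natCast, mul_div_assoc]

lemma prod_natCeil_div_two_pow_le_rpow {x : ℝ} {k : ℕ} (hk : 2 ^ k ≤ x) :
    ∏ j ∈ Icc 1 k, (⌈x / 2 ^ j⌉₊ : ℝ) ≤ 2 ^ (k * (1 + logb 2 x) - k * (k + 1) / 2) := by
  calc ∏ j ∈ Icc 1 k, (⌈x / 2 ^ j⌉₊ : ℝ)
      ≤ ∏ j ∈ Icc 1 k, (2 : ℝ) ^ (1 + logb 2 x - j) := by
        refine prod_le_prod (fun _ _ ↦ by positivity) fun j hj ↦ ?_
        refine natCeil_div_two_pow_le_rpow (le_trans ?_ hk)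
        exact pow_le_pow_right₀ one_le_two (mem_Icc.1 hj).2
    _ = 2 ^ (k * (1 + logb 2 x) - k * (k + 1) / 2) := by
      rw [← rpow_sum_of_pos two_pos, sum_sub_distrib, sum_const, Nat.card_Icc,
        sum_Icc_one_natCast, nsmul_eq_mul, add_tsub_cancel_right]

lemma two_mul_sqrt_rpow_logb {x : ℝ} (hx : 0 < x) :
    (2 * √x) ^ logb 2 x = 2 ^ (logb 2 x + logb 2 x ^ 2 / 2) := by
  have hsqrt : √x = 2 ^ (logb 2 x / 2) := by
    nth_rw 1 [sqrt_eq_rpow, ← rpow_logb two_pos (by norm_num) hx, ← rpow_mul two_pos.le]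
    ring_nf
  rw [hsqrt, mul_rpow two_pos.le (by positivity), ← rpow_mul two_pos.le, ← rpow_add two_pos]
  ring_nf

/-- For every integer `n ≥ 1`, with `k = ⌊log₂ n⌋`, one has
`∏_{j=1}^{k} ⌈n / 2ʲ⌉ ≤ (2 √n) ^ (log₂ n)`. -/
theorem prod_ceil_le_two_sqrt_pow_log (n : ℕ) (hn : 1 ≤ n) :
    ((∏ j ∈ Finset.Icc 1 (Nat.log 2 n), ⌈(n : ℝ) / 2 ^ j⌉₊ : ℕ) : ℝ)
      ≤ (2 * Real.sqrt n) ^ Real.logb 2 n := by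
  set k := Nat.log 2 n
  set L := logb 2 n
  have hk : (2 : ℝ) ^ k ≤ n := by exact_mod_cast Nat.pow_log_le_self 2 (by omega)
  have hkL : (k : ℝ) ≤ L := by exact_mod_cast natLog_le_logb n 2
  rw [Nat.cast_prod, two_mul_sqrt_rpow_logb (by positivity)]
  refine (prod_natCeil_div_two_pow_le_rpow hk).trans ?_
  rw [rpow_le_rpow_left_iff one_lt_two]
  nlinarith [sq_nonneg (L - k)]
end

section
/- Let w be a rich word with |w| ≥ n+1 and n > 0, and suppose the set F(w,n+1) of factors of w of length n+1 is closed under reversal. Then |F_p(w,n)| + |F_p(w,n+1)| = |F(w,n+1)| − |F(w,n)| + 2. -/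
namespace List

variable {A : Type*}

lemma finite_setOf_infix (v : List A) : {u : List A | u <:+: v}.Finite :=
  v.sublists.finite_toSet.subset fun _ hu => mem_sublists.mpr hu.sublist

lemma infix_of_prefix_of_suffix_concat {u v w : List A} {c : A} (huv : u <+: v)
    (hv : v <:+ w ++ [c]) (hlt : u.length < v.length) : u <:+: w := by
  obtain rfl | ⟨v', rfl, hv'⟩ := suffix_concat_iff.mp hv
  · simp at hlt
  obtain rfl | hu := prefix_concat_iff.mp huv
  · exact absurd hlt (lt_irrefl _)
  · exact hu.isInfix.trans hv'.isInfix

lemma exists_infix_length_succ {u w : List A} (hu : u <:+: w) (hlt : u.length < w.length) :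
    ∃ v, v <:+: w ∧ v.length = u.length + 1 ∧ u <:+: v := by
  obtain ⟨y, z, rfl⟩ := hu
  cases z with
  | cons b z =>
    exact ⟨u ++ [b], ⟨y, z, by simp⟩, by simp, (prefix_append u [b]).isInfix⟩
  | nil =>
    obtain rfl | ⟨y, a, rfl⟩ := y.eq_nil_or_concat
    · simp at hlt
    · exact ⟨a :: u, ⟨y, [], by simp⟩, by simp, (suffix_cons a u).isInfix⟩

lemma rtake_suffix (l : List A) (j : ℕ) : l.rtake j <:+ l := drop_suffix _ _

lemma length_rtake (l : List A) (j : ℕ) : (l.rtake j).length = min j l.length := by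
  simp only [rtake, length_drop]
  omega

lemma IsSuffix.eq_rtake {u l : List A} (h : u <:+ l) : u = l.rtake u.length :=
  suffix_iff_eq_drop.mp h

lemma rtake_suffix_rtake {l : List A} {i j : ℕ} (hij : i ≤ j) : l.rtake i <:+ l.rtake j :=
  suffix_of_suffix_length_le (rtake_suffix l i) (rtake_suffix l j)
    (by simp only [length_rtake]; omega)

end List

namespace RichWords

open List

section Palindromes

variable {A : Type*}

def palFactors (v : List A) : Set (List A) := {u | u <:+: v ∧ u.reverse = u}

lemma richList_iff (v : List A) : RichList v ↔ (palFactors v).ncard = v.length + 1 := Iff.rfl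

lemma palFactors_finite (v : List A) : (palFactors v).Finite :=
  (finite_setOf_infix v).subset fun _ hu => hu.1

/-- Both palindromes are suffixes of `w ++ [c]`, so the shorter one is also a prefix of the longer
and would occur in `w` if it were strictly shorter. -/
lemma eq_of_mem_palFactors_concat_of_not_infix {u v w : List A} {c : A}
    (hu : u ∈ palFactors (w ++ [c])) (hu' : ¬ u <:+: w)
    (hv : v ∈ palFactors (w ++ [c])) (hv' : ¬ v <:+: w) : u = v := by
  wlog huv : u.length ≤ v.length generalizing u v
  · exact (this hv hv' hu hu' (by omega)).symm
  have hus : u <:+ w ++ [c] := (infix_concat_iff.mp hu.1).resolve_right hu'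
  have hvs : v <:+ w ++ [c] := (infix_concat_iff.mp hv.1).resolve_right hv'
  have hsuf : u <:+ v := suffix_of_suffix_length_le hus hvs huv
  obtain hlt | heq := huv.lt_or_eq
  · have hpre : u <+: v := by simpa only [hu.2, hv.2] using hsuf.reverse
    exact absurd (infix_of_prefix_of_suffix_concat hpre hvs hlt) hu'
  · exact hsuf.eq_of_length heq

lemma palFactors_subset_concat (w : List A) (c : A) : palFactors w ⊆ palFactors (w ++ [c]) :=
  fun _ hu => ⟨hu.1.trans (prefix_append w [c]).isInfix, hu.2⟩

lemma ncard_palFactors_concat_le (w : List A) (c : A) :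
    (palFactors (w ++ [c])).ncard ≤ (palFactors w).ncard + 1 := by
  have hnew : (palFactors (w ++ [c]) \ palFactors w).ncard ≤ 1 :=
    (Set.ncard_le_one_iff (palFactors_finite _).sdiff).mpr fun hu hv =>
      eq_of_mem_palFactors_concat_of_not_infix hu.1 (fun h => hu.2 ⟨h, hu.1.2⟩)
        hv.1 (fun h => hv.2 ⟨h, hv.1.2⟩)
  rw [← Set.ncard_sdiff_add_ncard_of_subset (palFactors_subset_concat w c)
    (palFactors_finite _)]
  omega

lemma ncard_palFactors_le (v : List A) : (palFactors v).ncard ≤ v.length + 1 := by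
  induction v using reverseRecOn with
  | nil =>
    have : palFactors ([] : List A) = {[]} := by
      ext u
      simp +contextual [palFactors, infix_nil]
    simp [this]
  | append_singleton w c ih =>
    have := ncard_palFactors_concat_le w c
    simp only [length_append, length_singleton]
    omega

lemma RichList.of_concat {w : List A} {c : A} (h : RichList (w ++ [c])) : RichList w := by
  have := ncard_palFactors_concat_le w c
  have := ncard_palFactors_le w
  rw [richList_iff, length_append, length_singleton] at h
  rw [richList_iff]
  omega

lemma RichList.exists_palindromic_suffix_not_infix {w : List A} {c : A}
    (h : RichList (w ++ [c])) : ∃ r, r <:+ w ++ [c] ∧ r.reverse = r ∧ ¬ r <:+: w := by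
  by_contra! hall
  have hsub : palFactors (w ++ [c]) ⊆ palFactors w := fun u hu => by
    refine ⟨?_, hu.2⟩
    by_contra hu'
    exact hu' (hall u ((infix_concat_iff.mp hu.1).resolve_right hu') hu.2)
  have := Set.ncard_le_ncard hsub (palFactors_finite w)
  have := ncard_palFactors_le w
  rw [richList_iff, length_append, length_singleton] at h
  omega

end Palindromes

section Factors

variable {A : Type*}

lemma F_finite (w : List A) (j : ℕ) : (F (.fin w) j).Finite :=
  (finite_setOf_infix w).subset fun _ hu => hu.1

lemma F_eq_empty_of_length_lt {w : List A} {j : ℕ} (h : w.length < j) : F (.fin w) j = ∅ :=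
  Set.eq_empty_of_forall_notMem fun _ hu => by have := hu.1.length_le; have := hu.2; omega

lemma F_zero (w : List A) : F (.fin w) 0 = {[]} := by
  ext u
  simp +contextual [F, Word.Factor, length_eq_zero_iff, nil_infix]

lemma F_concat {w : List A} {c : A} {j : ℕ} (hj : j ≤ w.length + 1) :
    F (.fin (w ++ [c])) j = insert ((w ++ [c]).rtake j) (F (.fin w) j) := by
  ext u
  simp only [F, Word.Factor, Set.mem_insert_iff, infix_concat_iff]
  constructor
  · rintro ⟨hu | hu, rfl⟩
    · exact Or.inl hu.eq_rtake
    · exact Or.inr ⟨hu, rfl⟩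
  · rintro (rfl | ⟨hu, rfl⟩)
    · refine ⟨Or.inl (rtake_suffix _ _), ?_⟩
      simp only [length_rtake, length_append, length_singleton]
      omega
    · exact ⟨Or.inr hu, rfl⟩

lemma F_reverse_closed_of_succ {w : List A} {n : ℕ} (hlen : n + 1 ≤ w.length)
    (hcl : ∀ u ∈ F (.fin w) (n + 1), u.reverse ∈ F (.fin w) (n + 1)) :
    ∀ u ∈ F (.fin w) n, u.reverse ∈ F (.fin w) n := by
  rintro u ⟨hu, rfl⟩
  obtain ⟨v, hv, hvlen, huv⟩ := exists_infix_length_succ hu (by omega)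
  exact ⟨huv.reverse.trans (hcl v ⟨hv, hvlen⟩).1, length_reverse⟩

lemma Fp_zero (w : List A) : Fp (.fin w) 0 = {[]} := by
  ext u
  simp +contextual [Fp, F_zero]

lemma Fp_eq_empty_of_length_lt {w : List A} {j : ℕ} (h : w.length < j) : Fp (.fin w) j = ∅ := by
  simp [Fp, F_eq_empty_of_length_lt h]

end Factors

section ReversalClosure

variable {A : Type*}

def FRev (w : List A) (j : ℕ) : Set (List A) := F (.fin w) j ∪ reverse ⁻¹' F (.fin w) j

lemma FRev_finite (w : List A) (j : ℕ) : (FRev w j).Finite :=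
  (F_finite w j).union ((F_finite w j).preimage reverse_injective.injOn)

lemma FRev_eq_F {w : List A} {j : ℕ} (hcl : ∀ u ∈ F (.fin w) j, u.reverse ∈ F (.fin w) j) :
    FRev w j = F (.fin w) j :=
  Set.union_eq_left.mpr fun u hu => by simpa using hcl _ hu

lemma FRev_zero (w : List A) : FRev w 0 = {[]} := by
  ext u
  simp [FRev, F_zero]

lemma FRev_eq_empty_of_length_lt {w : List A} {j : ℕ} (h : w.length < j) : FRev w j = ∅ := by
  simp [FRev, F_eq_empty_of_length_lt h]

lemma mem_FRev_of_infix {w u v : List A} {i j : ℕ} (hu : u ∈ FRev w j) (hvu : v <:+: u)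
    (hv : v.length = i) : v ∈ FRev w i := by
  rcases hu with hu | hu
  · exact Or.inl ⟨hvu.trans hu.1, hv⟩
  · exact Or.inr ⟨hvu.reverse.trans hu.1, by rw [length_reverse, hv]⟩

lemma mem_F_of_mem_FRev {w u : List A} {j : ℕ} (hu : u ∈ FRev w j) (hup : u.reverse = u) :
    u ∈ F (.fin w) j := by
  rcases hu with hu | hu
  exacts [hu, by rwa [Set.mem_preimage, hup] at hu]

lemma FRev_concat {w : List A} {c : A} {j : ℕ} (hj : j ≤ w.length + 1) :
    FRev (w ++ [c]) j =
      insert ((w ++ [c]).rtake j) (insert ((w ++ [c]).rtake j).reverse (FRev w j)) := by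
  ext u
  simp only [FRev, F_concat hj, Set.mem_union, Set.mem_insert_iff, Set.mem_preimage,
    reverse_eq_iff]
  tauto

open scoped Classical in
lemma ncard_FRev_concat {w : List A} {c : A} {j : ℕ} (hj : j ≤ w.length + 1) :
    (FRev (w ++ [c]) j).ncard = (FRev w j).ncard +
      if (w ++ [c]).rtake j ∈ FRev w j then 0
      else if ((w ++ [c]).rtake j).reverse = (w ++ [c]).rtake j then 1 else 2 := by
  set s := (w ++ [c]).rtake j
  have hrev : s.reverse ∈ FRev w j ↔ s ∈ FRev w j := by
    simp only [FRev, Set.mem_union, Set.mem_preimage, reverse_reverse]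
    tauto
  rw [FRev_concat hj]
  by_cases hs : s ∈ FRev w j
  · rw [if_pos hs, Set.insert_eq_of_mem (hrev.mpr hs), Set.insert_eq_of_mem hs]
    rfl
  rw [if_neg hs]
  by_cases hp : s.reverse = s
  · rw [if_pos hp, hp, Set.insert_idem, Set.ncard_insert_of_notMem hs (FRev_finite w j)]
  · have hs' : s ∉ insert s.reverse (FRev w j) := by
      rintro (h | h)
      exacts [hp h.symm, hs h]
    rw [if_neg hp, Set.ncard_insert_of_notMem hs' ((FRev_finite w j).insert _),
      Set.ncard_insert_of_notMem (hrev.not.mpr hs) (FRev_finite w j)]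

open scoped Classical in
lemma ncard_Fp_concat {w : List A} {c : A} {j : ℕ} (hj : j ≤ w.length + 1) :
    (Fp (.fin (w ++ [c])) j).ncard = (Fp (.fin w) j).ncard +
      if (w ++ [c]).rtake j ∉ FRev w j ∧ ((w ++ [c]).rtake j).reverse = (w ++ [c]).rtake j
      then 1 else 0 := by
  set s := (w ++ [c]).rtake j
  have hFp : ∀ u, u ∈ Fp (.fin (w ++ [c])) j ↔ (u = s ∧ s.reverse = s) ∨ u ∈ Fp (.fin w) j := by
    intro u
    simp only [Fp, F_concat hj, Set.mem_insert_iff, Set.mem_ofPred_eq, s]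
    grind
  by_cases hnew : s ∉ FRev w j ∧ s.reverse = s
  · have hins : Fp (.fin (w ++ [c])) j = insert s (Fp (.fin w) j) := by
      ext u
      simp only [hFp, Set.mem_insert_iff, hnew.2, and_true]
    rw [if_pos hnew, hins, Set.ncard_insert_of_notMem (fun h => hnew.1 (Or.inl h.1))
      ((F_finite w j).subset fun _ hu => hu.1)]
  · have heq : Fp (.fin (w ++ [c])) j = Fp (.fin w) j := by
      ext u
      rw [hFp]
      refine or_iff_right_of_imp ?_
      rintro ⟨rfl, hup⟩
      refine ⟨mem_F_of_mem_FRev ?_ hup, hup⟩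
      by_contra hu
      exact hnew ⟨hu, hup⟩
    rw [if_neg hnew, heq]
    rfl

end ReversalClosure

section Step

variable {A : Type*}

lemma rtake_mem_FRev_of_palindrome {w : List A} {c : A} {n : ℕ} (hn : n ≤ w.length)
    (hs : ((w ++ [c]).rtake (n + 1)).reverse = (w ++ [c]).rtake (n + 1)) :
    (w ++ [c]).rtake n ∈ FRev w n := by
  have hpre : ((w ++ [c]).rtake n).reverse <+: (w ++ [c]).rtake (n + 1) := by
    simpa only [hs] using (rtake_suffix_rtake (l := w ++ [c]) (Nat.le_add_right n 1)).reverse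
  refine Or.inr ⟨infix_of_prefix_of_suffix_concat hpre (rtake_suffix _ _) ?_, ?_⟩ <;>
    simp only [length_reverse, length_rtake, length_append, length_singleton] <;> omega

/-- The palindromic suffix `r` of `w ++ [c]` missing from `w` has length at most `n`: otherwise the
reversal of the suffix `s` of length `n + 1` would be a prefix of `r`, hence a factor of `w` or `s`
itself. So `r` is a suffix of the suffix `t` of length `n` and a prefix of `tᴿ`. -/
lemma RichList.rtake_not_mem_FRev {w : List A} {c : A} (h : RichList (w ++ [c])) {n : ℕ}
    (hn : n ≤ w.length) (hs : (w ++ [c]).rtake (n + 1) ∉ FRev w (n + 1))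
    (hsp : ((w ++ [c]).rtake (n + 1)).reverse ≠ (w ++ [c]).rtake (n + 1)) :
    (w ++ [c]).rtake n ∉ FRev w n := by
  set s := (w ++ [c]).rtake (n + 1)
  have hslen : s.length = n + 1 := by
    simp only [s, length_rtake, length_append, length_singleton]
    omega
  obtain ⟨r, hr, hrp, hrw⟩ := h.exists_palindromic_suffix_not_infix
  have hrn : r.length ≤ n := by
    by_contra! hlt
    have hsr : s <:+ r := suffix_of_suffix_length_le (rtake_suffix _ _) hr (by omega)
    have hpre : s.reverse <+: r := by simpa only [hrp] using hsr.reverse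
    obtain hlt | heq := (show s.length ≤ r.length by omega).lt_or_eq
    · exact hs (Or.inr ⟨infix_of_prefix_of_suffix_concat hpre hr (by simpa using hlt),
        by simpa using hslen⟩)
    · exact hsp (hsr.eq_of_length heq ▸ hrp)
  have htlen : ((w ++ [c]).rtake n).length = n := by
    simp only [length_rtake, length_append, length_singleton]
    omega
  have hrt : r <:+ (w ++ [c]).rtake n :=
    suffix_of_suffix_length_le hr (rtake_suffix _ _) (by omega)
  exact fun ht => hrw (mem_F_of_mem_FRev (mem_FRev_of_infix ht hrt.isInfix rfl) hrp).1

lemma ncard_Fp_add_ncard_Fp_add_ncard_FRev {w : List A} (hw : RichList w) {n : ℕ}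
    (hn : n ≤ w.length) :
    (Fp (.fin w) n).ncard + (Fp (.fin w) (n + 1)).ncard + (FRev w n).ncard =
      (FRev w (n + 1)).ncard + 2 := by
  induction w using reverseRecOn with
  | nil =>
    obtain rfl : n = 0 := by simpa using hn
    simp [Fp_zero, FRev_zero, Fp_eq_empty_of_length_lt, FRev_eq_empty_of_length_lt]
  | append_singleton w c ih =>
    rw [length_append, length_singleton] at hn
    classical
    obtain hn | rfl := Nat.lt_or_eq_of_le hn
    · rw [Nat.lt_succ_iff] at hn
      rw [ncard_Fp_concat (by omega), ncard_Fp_concat (by omega), ncard_FRev_concat (by omega),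
        ncard_FRev_concat (by omega)]
      have hsuf (hs : (w ++ [c]).rtake (n + 1) ∈ FRev w (n + 1)) : (w ++ [c]).rtake n ∈ FRev w n :=
        mem_FRev_of_infix hs (rtake_suffix_rtake (Nat.le_add_right n 1)).isInfix
          (by simp only [length_rtake, length_append, length_singleton]; omega)
      have hpal := rtake_mem_FRev_of_palindrome (c := c) hn
      have hnew := hw.rtake_not_mem_FRev hn
      have := ih hw.of_concat hn
      split_ifs <;> grind
    · rw [ncard_Fp_concat le_rfl, ncard_FRev_concat le_rfl]
      simp only [FRev_eq_empty_of_length_lt (Nat.lt_succ_self _),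
        Fp_eq_empty_of_length_lt (Nat.lt_succ_self _), Set.mem_empty_iff_false,
        FRev_eq_empty_of_length_lt (by simp : (w ++ [c]).length < w.length + 1 + 1),
        Fp_eq_empty_of_length_lt (by simp : (w ++ [c]).length < w.length + 1 + 1)]
      split_ifs <;> simp_all

end Step

theorem palindromes_vs_factors_rich_eq_general {A : Type*} (w : List A) (hw : RichList w)
    (n : ℕ) (hlen : n + 1 ≤ w.length)
    (hcl : ∀ u ∈ F (Word.fin w) (n + 1), u.reverse ∈ F (Word.fin w) (n + 1)) :
    ((Fp (Word.fin w) n).ncard : ℤ) + ((Fp (Word.fin w) (n + 1)).ncard : ℤ)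
      = ((F (Word.fin w) (n + 1)).ncard : ℤ) - ((F (Word.fin w) n).ncard : ℤ) + 2 := by
  have key := ncard_Fp_add_ncard_Fp_add_ncard_FRev hw (n := n) (by omega)
  rw [FRev_eq_F hcl, FRev_eq_F (F_reverse_closed_of_succ hlen hcl)] at key
  omega

/-- If `w` is a rich word with `|w| ≥ n + 1`, `n > 0`, and `F(w, n+1)`
closed under reversal, then `|F_p(w,n)| + |F_p(w,n+1)| = |F(w,n+1)| - |F(w,n)| + 2`. -/
theorem palindromes_vs_factors_rich_eq {A : Type*} (w : List A) (hw : RichList w)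
    (n : ℕ) (hn : 0 < n) (hlen : n + 1 ≤ w.length)
    (hcl : ∀ u ∈ F (Word.fin w) (n + 1), u.reverse ∈ F (Word.fin w) (n + 1)) :
    ((Fp (Word.fin w) n).ncard : ℤ) + ((Fp (Word.fin w) (n + 1)).ncard : ℤ)
      = ((F (Word.fin w) (n + 1)).ncard : ℤ) - ((F (Word.fin w) n).ncard : ℤ) + 2 :=
  palindromes_vs_factors_rich_eq_general w hw n hlen hcl
end RichWords
end

section
/- Let w be a rich word over an alphabet with q > 1 letters such that F(w,n+1) is closed under reversal, |w| ≥ n+1, and n > 0. Let F̂_p(w,k) = max{ |F_p(w,j)| : 0 ≤ j ≤ k }. Then |F(w,n)| ≤ 2(n−1)·F̂_p(w,n) − 2(n−1) + q. -/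
namespace RichWords

/-!
In a rich word `w` every prefix `w.take e` with `e ≥ 1` ends with a palindrome occurring for the
first time there, and every palindromic factor arises this way for exactly one `e`.
Sort the factors `u` of length `n` by the end `e` of their first occurrence. If the palindrome
born at `e` is longer than `u`, then `u` is a suffix of it, so `uᴿ` is a prefix of it and occurs
earlier; such `u` come in pairs `{u, uᴿ}` (using closure under reversal) disjoint from the
palindromes of length `n`. Every other `u` gets the palindrome born at `e`, of length at most
`n`, and so do the positions `1, …, n - 1`. Comparing the two counts gives
`|F(w,n)| + 2(n - 1) + |F_p(w,n)| ≤ 2 ∑_{j=1}^{n} |F_p(w,j)|`, and bounding `|F_p(w,1)| ≤ q`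
and the other terms by `F̂_p(w,n)` gives the theorem.
-/

section

variable {A : Type*}

lemma finite_setOf_infix (w : List A) : {u : List A | u <:+: w}.Finite :=
  w.sublists.finite_toSet.subset fun _ hu => List.mem_sublists.2 hu.sublist

lemma finite_F_fin (w : List A) (n : ℕ) : (F (Word.fin w) n).Finite :=
  (finite_setOf_infix w).subset fun _ hu => hu.1

lemma finite_Fp_fin (w : List A) (n : ℕ) : (Fp (Word.fin w) n).Finite :=
  (finite_F_fin w n).subset fun _ hu => hu.1

lemma ncard_le_card_of_forall_length_eq_one [Fintype A] {s : Set (List A)}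
    (hs : ∀ u ∈ s, u.length = 1) : s.ncard ≤ Fintype.card A := by
  have hsub : s ⊆ (fun a : A => [a]) '' Set.univ := fun u hu => by
    obtain ⟨a, rfl⟩ := List.length_eq_one_iff.1 (hs u hu)
    exact ⟨a, trivial, rfl⟩
  calc s.ncard ≤ ((fun a : A => [a]) '' Set.univ).ncard :=
        Set.ncard_le_ncard hsub (Set.toFinite _)
    _ ≤ (Set.univ : Set A).ncard := Set.ncard_image_le Set.finite_univ
    _ = Fintype.card A := by rw [Set.ncard_univ, Nat.card_eq_fintype_card]

lemma exists_infix_length_succ {u w : List A} (hu : u <:+: w) (hlt : u.length < w.length) :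
    ∃ v, u <:+: v ∧ v <:+: w ∧ v.length = u.length + 1 := by
  obtain ⟨s, t, rfl⟩ := hu
  rcases t with _ | ⟨c, t⟩
  · rcases s.eq_nil_or_concat' with rfl | ⟨s, a, rfl⟩
    · simp at hlt
    · exact ⟨a :: u, ⟨[a], [], by simp⟩, ⟨s, [], by simp⟩, rfl⟩
  · exact ⟨u ++ [c], ⟨[], [c], by simp⟩, ⟨s, t, by simp⟩, by simp⟩

lemma reverse_mem_F_of_reverse_mem_F_succ {w : List A} {n : ℕ} (hlen : n + 1 ≤ w.length)
    (hcl : ∀ u ∈ F (Word.fin w) (n + 1), u.reverse ∈ F (Word.fin w) (n + 1))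
    {u : List A} (hu : u ∈ F (Word.fin w) n) : u.reverse ∈ F (Word.fin w) n := by
  obtain ⟨v, huv, hvw, hv⟩ := exists_infix_length_succ hu.1 (by rw [hu.2]; omega)
  exact ⟨(List.reverse_infix.2 huv).trans (hcl v ⟨hvw, by rw [hv, hu.2]⟩).1, by simp [hu.2]⟩

/-- The end position of the first occurrence of `u` in `w` (junk value `0` if `u` is not a
factor of `w`). -/
noncomputable def firstEnd (w u : List A) : ℕ := sInf {e | u <:+ w.take e}

section FirstEnd

variable {w u : List A}

lemma exists_suffix_take_of_infix (h : u <:+: w) : ∃ e ≤ w.length, u <:+ w.take e := by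
  obtain ⟨t, hut, htw⟩ := List.infix_iff_suffix_prefix.1 h
  exact ⟨t.length, htw.length_le, List.prefix_iff_eq_take.1 htw ▸ hut⟩

lemma suffix_take_firstEnd (h : u <:+: w) : u <:+ w.take (firstEnd w u) :=
  Nat.sInf_mem ((exists_suffix_take_of_infix h).imp fun _ he => he.2)

lemma firstEnd_le {e : ℕ} (h : u <:+ w.take e) : firstEnd w u ≤ e := Nat.sInf_le h

lemma firstEnd_le_length (h : u <:+: w) : firstEnd w u ≤ w.length :=
  have ⟨_, hle, he⟩ := exists_suffix_take_of_infix h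
  (firstEnd_le he).trans hle

lemma length_le_firstEnd (h : u <:+: w) : u.length ≤ firstEnd w u :=
  (suffix_take_firstEnd h).length_le.trans (List.length_take_le _ _)

lemma firstEnd_nil (w : List A) : firstEnd w [] = 0 :=
  Nat.le_zero.1 (firstEnd_le List.nil_suffix)

lemma firstEnd_add_length_le {t : List A} {e : ℕ} (h : u ++ t <:+ w.take e) :
    firstEnd w u + t.length ≤ e := by
  obtain ⟨z, hz⟩ := h
  have hlen := List.length_take_le e w
  rw [← hz] at hlen
  simp only [List.length_append] at hlen
  have htake : (w.take e).take (z.length + u.length) = z ++ u := by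
    rw [← hz, ← List.append_assoc, List.take_left' (by simp)]
  rw [List.take_take, min_eq_left (by omega)] at htake
  have := firstEnd_le (w := w) (e := z.length + u.length) (htake ▸ List.suffix_append z u)
  omega

/-- `uᴿ` is a proper prefix of the palindrome `r`, so it has already occurred before `r` ends. -/
lemma firstEnd_reverse_lt {r : List A} {e : ℕ} (hr : r.reverse = r) (hre : r <:+ w.take e)
    (hur : u <:+ r) (hlt : u.length < r.length) : firstEnd w u.reverse < e := by
  obtain ⟨t, rfl⟩ : u.reverse <+: r := hr ▸ List.reverse_prefix.2 hur
  have := firstEnd_add_length_le hre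
  simp only [List.length_append, List.length_reverse] at hlt
  omega

lemma firstEnd_injOn_F (w : List A) (n : ℕ) : Set.InjOn (firstEnd w) (F (Word.fin w) n) :=
  fun u hu v hv huv => (List.suffix_of_suffix_length_le (suffix_take_firstEnd hu.1)
    (huv ▸ suffix_take_firstEnd hv.1) (by rw [hu.2, hv.2])).eq_of_length (by rw [hu.2, hv.2])

lemma firstEnd_injOn_palindromes (w : List A) :
    Set.InjOn (firstEnd w) {u | u <:+: w ∧ u.reverse = u} := by
  suffices ∀ u v : List A, u <:+: w → u.reverse = u → v <:+: w → v.reverse = v →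
      firstEnd w u = firstEnd w v → u.length ≤ v.length → u = v by
    intro u hu v hv huv
    rcases le_total u.length v.length with h | h
    · exact this u v hu.1 hu.2 hv.1 hv.2 huv h
    · exact (this v u hv.1 hv.2 hu.1 hu.2 huv.symm h).symm
  intro u v hu hpu hv hpv huv hle
  have hvs := huv ▸ suffix_take_firstEnd hv
  have hus := List.suffix_of_suffix_length_le (suffix_take_firstEnd hu) hvs hle
  refine hus.eq_of_length (le_antisymm hle (not_lt.1 fun hlt => ?_))
  have := firstEnd_reverse_lt hpv hvs hus hlt
  rw [hpu] at this
  omega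

end FirstEnd

lemma RichList.surjOn_firstEnd {w : List A} (hw : RichList w) :
    Set.SurjOn (firstEnd w) {u | u <:+: w ∧ u.reverse = u} (Set.Iic w.length) := by
  set P := {u | u <:+: w ∧ u.reverse = u}
  have hmaps : firstEnd w '' P ⊆ Set.Iic w.length := by
    rintro _ ⟨u, hu, rfl⟩
    exact firstEnd_le_length hu.1
  refine (Set.eq_of_subset_of_ncard_le hmaps ?_ (Set.finite_Iic _)).symm.subset
  rw [(firstEnd_injOn_palindromes w).ncard_image, hw, Set.ncard_Iic_nat]

/-- The palindrome whose first occurrence in `w` ends at position `e`. -/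
noncomputable def novelPalindrome (w : List A) (e : ℕ) : List A :=
  Function.invFunOn (firstEnd w) {u | u <:+: w ∧ u.reverse = u} e

lemma RichList.novelPalindrome_spec {w : List A} (hw : RichList w) {e : ℕ} (he : e ≤ w.length) :
    (novelPalindrome w e <:+: w ∧ (novelPalindrome w e).reverse = novelPalindrome w e) ∧
      firstEnd w (novelPalindrome w e) = e :=
  Function.invFunOn_pos (hw.surjOn_firstEnd he)

lemma RichList.one_le_length_novelPalindrome {w : List A} (hw : RichList w) {e : ℕ}
    (h1 : 1 ≤ e) (he : e ≤ w.length) : 1 ≤ (novelPalindrome w e).length := by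
  refine List.length_pos_iff.2 fun hnil => ?_
  have := (hw.novelPalindrome_spec he).2
  rw [hnil, firstEnd_nil] at this
  omega

lemma RichList.length_novelPalindrome_firstEnd_le {w u : List A} (hw : RichList w)
    (hu : u <:+: w) (h : firstEnd w u ≤ firstEnd w u.reverse) :
    (novelPalindrome w (firstEnd w u)).length ≤ u.length := by
  obtain ⟨⟨hr, hpal⟩, hre⟩ := hw.novelPalindrome_spec (firstEnd_le_length hu)
  by_contra! hlt
  have hrs := hre ▸ suffix_take_firstEnd hr
  have := firstEnd_reverse_lt hpal hrs
    (List.suffix_of_suffix_length_le (suffix_take_firstEnd hu) hrs hlt.le) hlt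
  omega

/-- Positions `1, …, n - 1` and the first-occurrence ends of the factors `u` of length `n` with
`uᴿ` not occurring earlier carry distinct palindromes of lengths `1, …, n`. -/
lemma RichList.ncard_add_le_sum_ncard_Fp {w : List A} (hw : RichList w) {n : ℕ} (hn : 1 ≤ n)
    (hnw : n ≤ w.length + 1) :
    (F (Word.fin w) n ∩ {u | firstEnd w u ≤ firstEnd w u.reverse}).ncard + (n - 1)
      ≤ ∑ j ∈ Finset.Icc 1 n, (Fp (Word.fin w) j).ncard := by
  set B := F (Word.fin w) n ∩ {u | firstEnd w u ≤ firstEnd w u.reverse}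
  set T := firstEnd w '' B ∪ Set.Icc 1 (n - 1)
  have hT : ∀ e ∈ T, e ≤ w.length ∧ 1 ≤ (novelPalindrome w e).length ∧
      (novelPalindrome w e).length ≤ n := by
    rintro _ (⟨u, ⟨⟨hu, rfl⟩, hur⟩, rfl⟩ | ⟨he1, he⟩)
    · have hle := firstEnd_le_length hu
      exact ⟨hle, hw.one_le_length_novelPalindrome (hn.trans (length_le_firstEnd hu)) hle,
        hw.length_novelPalindrome_firstEnd_le hu hur⟩
    · have hle : _ ≤ w.length := he.trans (by omega)
      have := length_le_firstEnd (hw.novelPalindrome_spec hle).1.1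
      rw [(hw.novelPalindrome_spec hle).2] at this
      exact ⟨hle, hw.one_le_length_novelPalindrome he1 hle, by omega⟩
  have hBfin : B.Finite := (finite_F_fin w n).inter_of_left _
  have hdisj : Disjoint (firstEnd w '' B) (Set.Icc 1 (n - 1)) := by
    refine Set.disjoint_left.2 ?_
    rintro _ ⟨u, ⟨hu, -⟩, rfl⟩ ⟨-, he⟩
    have := hu.2 ▸ length_le_firstEnd hu.1
    omega
  have hcard : T.ncard = B.ncard + (n - 1) := by
    rw [Set.ncard_union_eq hdisj (hBfin.image _) (Set.finite_Icc _ _),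
      ((firstEnd_injOn_F w n).mono Set.inter_subset_left).ncard_image, Set.ncard_Icc_nat,
      Nat.add_sub_cancel]
  have hinj : Set.InjOn (novelPalindrome w) T := fun e he e' he' h => by
    rw [← (hw.novelPalindrome_spec (hT e he).1).2, h, (hw.novelPalindrome_spec (hT e' he').1).2]
  have himage : novelPalindrome w '' T ⊆ ⋃ j ∈ Finset.Icc 1 n, Fp (Word.fin w) j := by
    rintro _ ⟨e, he, rfl⟩
    obtain ⟨hle, h1, h2⟩ := hT e he
    simp only [Set.mem_iUnion, Finset.mem_Icc]
    exact ⟨_, ⟨h1, h2⟩, ⟨(hw.novelPalindrome_spec hle).1.1, rfl⟩,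
      (hw.novelPalindrome_spec hle).1.2⟩
  calc B.ncard + (n - 1) = (novelPalindrome w '' T).ncard := by
        rw [hinj.ncard_image, hcard]
    _ ≤ (⋃ j ∈ Finset.Icc 1 n, Fp (Word.fin w) j).ncard :=
        Set.ncard_le_ncard himage (Set.Finite.biUnion (Finset.finite_toSet _)
          fun j _ => finite_Fp_fin w j)
    _ ≤ ∑ j ∈ Finset.Icc 1 n, (Fp (Word.fin w) j).ncard := Finset.set_ncard_biUnion_le _ _

lemma two_mul_ncard_add_ncard_palindromes_le {X S : Set (List A)} (φ : List A → ℕ)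
    (hX : X.Finite) (hrev : ∀ u ∈ X, u.reverse ∈ X) (hSX : S ⊆ X)
    (hS : ∀ u ∈ S, φ u.reverse < φ u) :
    2 * S.ncard + {u ∈ X | u.reverse = u}.ncard ≤ X.ncard := by
  set R := List.reverse '' S
  have hRX : R ⊆ X := by
    rintro _ ⟨v, hv, rfl⟩
    exact hrev v (hSX hv)
  have hSR : Disjoint S R := by
    refine Set.disjoint_left.2 ?_
    rintro _ hu ⟨v, hv, rfl⟩
    have h₁ := hS _ hu
    have h₂ := hS v hv
    rw [List.reverse_reverse] at h₁
    omega
  have hSRP : Disjoint (S ∪ R) {u ∈ X | u.reverse = u} := by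
    refine Set.disjoint_left.2 ?_
    rintro u (hu | ⟨v, hv, rfl⟩) ⟨-, hpal⟩
    · have := hS u hu
      rw [hpal] at this
      omega
    · have := hS v hv
      rw [List.reverse_reverse] at hpal
      rw [← hpal] at this
      omega
  calc 2 * S.ncard + {u ∈ X | u.reverse = u}.ncard
      = (S ∪ R ∪ {u ∈ X | u.reverse = u}).ncard := by
        rw [Set.ncard_union_eq hSRP ((hX.subset hSX).union (hX.subset hRX)) (hX.sep _),
          Set.ncard_union_eq hSR (hX.subset hSX) (hX.subset hRX),
          Set.ncard_image_of_injective _ List.reverse_injective]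
        ring
    _ ≤ X.ncard := Set.ncard_le_ncard
        (Set.union_subset (Set.union_subset hSX hRX) (Set.sep_subset _ _)) hX

lemma RichList.ncard_F_add_le {w : List A} (hw : RichList w) {n : ℕ} (hn : 1 ≤ n)
    (hnw : n ≤ w.length + 1) (hcl : ∀ u ∈ F (Word.fin w) n, u.reverse ∈ F (Word.fin w) n) :
    (F (Word.fin w) n).ncard + 2 * (n - 1) + (Fp (Word.fin w) n).ncard
      ≤ 2 * ∑ j ∈ Finset.Icc 1 n, (Fp (Word.fin w) j).ncard := by
  have hsplit := Set.ncard_inter_add_ncard_sdiff_eq_ncard (F (Word.fin w) n)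
    {u | firstEnd w u ≤ firstEnd w u.reverse} (finite_F_fin w n)
  have hearly := hw.ncard_add_le_sum_ncard_Fp hn hnw
  have hlate := two_mul_ncard_add_ncard_palindromes_le (firstEnd w) (finite_F_fin w n) hcl
    (S := F (Word.fin w) n \ {u | firstEnd w u ≤ firstEnd w u.reverse})
    Set.sdiff_subset fun u hu => not_le.1 hu.2
  change _ + (Fp (Word.fin w) n).ncard ≤ _ at hlate
  omega

lemma two_mul_sum_Icc_le (f : ℕ → ℕ) {n M q : ℕ} (hn : 1 ≤ n)
    (hM : ∀ i ∈ Finset.Icc 1 n, f i ≤ M) (hq : f 1 ≤ q) :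
    2 * ∑ i ∈ Finset.Icc 1 n, f i ≤ q + 2 * (n - 1) * M + f n := by
  induction n, hn using Nat.le_induction with
  | base => simp only [Finset.Icc_self, Finset.sum_singleton]; omega
  | succ n hn ih =>
    rw [Finset.sum_Icc_succ_top (by omega)]
    have hsum := ih fun i hi => hM i (by simp only [Finset.mem_Icc] at hi ⊢; omega)
    have hn_le := hM n (by simp only [Finset.mem_Icc]; omega)
    have hsucc_le := hM (n + 1) (by simp only [Finset.mem_Icc]; omega)
    have hmul : 2 * (n + 1 - 1) * M = 2 * (n - 1) * M + 2 * M := by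
      obtain ⟨k, rfl⟩ := Nat.exists_eq_add_of_le hn
      simp only [Nat.add_sub_cancel, Nat.add_sub_cancel_left]
      ring
    omega

end

theorem factor_le_hat_palindromic_general {A : Type*} [Fintype A]
    (w : List A) (hw : RichList w) (n : ℕ) (hn : 0 < n) (hlen : n + 1 ≤ w.length)
    (hcl : ∀ u ∈ F (Word.fin w) (n + 1), u.reverse ∈ F (Word.fin w) (n + 1)) :
    ((F (Word.fin w) n).ncard : ℤ)
      ≤ 2 * ((n : ℤ) - 1)
            * (((Finset.range (n + 1)).sup fun j => (Fp (Word.fin w) j).ncard : ℕ) : ℤ)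
        - 2 * ((n : ℤ) - 1) + (Fintype.card A : ℤ) := by
  have hkey := hw.ncard_F_add_le hn (by omega)
    fun u hu => reverse_mem_F_of_reverse_mem_F_succ hlen hcl hu
  have hsum := two_mul_sum_Icc_le (fun j => (Fp (Word.fin w) j).ncard) hn
    (M := (Finset.range (n + 1)).sup fun j => (Fp (Word.fin w) j).ncard)
    (fun i hi => Finset.le_sup (f := fun j => (Fp (Word.fin w) j).ncard)
      (Finset.mem_range.2 (by simp only [Finset.mem_Icc] at hi; omega)))
    (ncard_le_card_of_forall_length_eq_one fun u hu => hu.1.2)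
  have hnat := hkey.trans hsum
  zify [Nat.one_le_iff_ne_zero.2 hn.ne'] at hnat
  linarith

/-- If `w` is a rich word over an alphabet with `q > 1` letters with
`F(w, n+1)` closed under reversal, `|w| ≥ n + 1` and `n > 0`, then
`|F(w,n)| ≤ 2(n-1) ⬝ F̂_p(w,n) - 2(n-1) + q`,
where `F̂_p(w, k) = max {|F_p(w, j)| : 0 ≤ j ≤ k}`. -/
theorem factor_le_hat_palindromic {A : Type*} [Fintype A] (hq : 1 < Fintype.card A)
    (w : List A) (hw : RichList w) (n : ℕ) (hn : 0 < n) (hlen : n + 1 ≤ w.length)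
    (hcl : ∀ u ∈ F (Word.fin w) (n + 1), u.reverse ∈ F (Word.fin w) (n + 1)) :
    ((F (Word.fin w) n).ncard : ℤ)
      ≤ 2 * ((n : ℤ) - 1)
            * (((Finset.range (n + 1)).sup fun j => (Fp (Word.fin w) j).ncard : ℕ) : ℤ)
        - 2 * ((n : ℤ) - 1) + (Fintype.card A : ℤ) :=
  factor_le_hat_palindromic_general w hw n hn hlen hcl

end RichWords
end
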